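/- Let I_m denote the two-sided ideal of the free unital associative algebra K⟨X⟩ generated by all left-normed commutators [u_1,...,u_m] of elements of K⟨X⟩. Then for m, n ≥ 2, I_m · I_n ⊆ I_{m+n−2}. -/

import Mathlib

/-!
Let `L_w` be the span of the left-normed commutators of length `w`; then `L_{w+1} ⊆ L_w`, and
`I_w` is the ideal generated by `L_w`. As `[G, b] w c' = [G, b w] c' - b [G, w] c'`, it suffices
to show `L_i L_j ⊆ I_t` whenever `i + j = t + 2`. Commutating `D E` further with a list of
elements expands by the Leibniz rule, and `D [E, q] = [D E, q] - [D, q] E`; together they reduce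
the claim to `E ∈ L_3`, where
`[G, b] [E, q] = [G, b E, q] - [G, b, q] E - b [G, E, q] - [b, q] [G, E]` with `E ∈ L_2`
leaves a single commutator of length `t` and products whose second factor is shorter than `j`,
or whose first factor is. The latter become the former in the opposite algebra, so the claim
follows by induction on `j`, for all algebras at once.
-/

/-- The commutator `[a,b] = ab - ba` in a ring. -/
def rcomm {A : Type*} [Ring A] (a b : A) : A := a * b - b * a

/-- The left-normed commutator `[a, l₀, l₁, ...]`. -/
def lnc {A : Type*} [Ring A] (a : A) (l : List A) : A := l.foldl rcomm a

variable (K : Type*) [Field K]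

/-- The set of left-normed commutators `[u_1, ..., u_m]` of elements of the free unital
associative algebra `K⟨X⟩` on a countable set `X`. -/
def commSet (m : ℕ) : Set (FreeAlgebra K ℕ) :=
  {w | ∃ (a : FreeAlgebra K ℕ) (l : List (FreeAlgebra K ℕ)), l.length + 1 = m ∧ w = lnc a l}

/-- The two-sided ideal `I_m` of `K⟨X⟩` generated by all left-normed commutators of
length `m`, as the `K`-span of the elements `u·c·v` with `c` such a commutator. -/
def commIdeal (m : ℕ) : Submodule K (FreeAlgebra K ℕ) :=
  Submodule.span K {w | ∃ u v c, c ∈ commSet K m ∧ w = u * c * v}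

section Commutators

variable {A : Type*} [Ring A]

lemma lnc_cons (a x : A) (l : List A) : lnc a (x :: l) = lnc (rcomm a x) l := rfl

lemma lnc_append (a : A) (l₁ l₂ : List A) : lnc a (l₁ ++ l₂) = lnc (lnc a l₁) l₂ :=
  List.foldl_append

lemma lnc_concat (a x : A) (l : List A) : lnc a (l ++ [x]) = rcomm (lnc a l) x :=
  List.foldl_concat ..

lemma lnc_add (l : List A) (a b : A) : lnc (a + b) l = lnc a l + lnc b l := by
  induction l generalizing a b with
  | nil => rfl
  | cons x l ih =>
    rw [lnc_cons, lnc_cons, lnc_cons, ← ih]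
    congr 1
    simp only [rcomm, add_mul, mul_add]
    abel

lemma lnc_sub (l : List A) (a b : A) : lnc (a - b) l = lnc a l - lnc b l :=
  eq_sub_of_add_eq (by rw [← lnc_add, sub_add_cancel])

lemma lnc_smul {R : Type*} [CommRing R] [Algebra R A] (l : List A) (r : R) (a : A) :
    lnc (r • a) l = r • lnc a l := by
  induction l generalizing a with
  | nil => rfl
  | cons x l ih =>
    rw [lnc_cons, lnc_cons, ← ih]
    congr 1
    simp only [rcomm, smul_mul_assoc, mul_smul_comm, smul_sub]

variable (R : Type*) [CommRing R] [Algebra R A]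

def lncLinearMap (l : List A) : A →ₗ[R] A where
  toFun a := lnc a l
  map_add' := lnc_add l
  map_smul' := lnc_smul l

end Commutators

section Spans

variable (R A : Type*) [CommRing R] [Ring A] [Algebra R A]

def lncSet (w : ℕ) : Set A := {x | ∃ (a : A) (l : List A), l.length + 1 = w ∧ x = lnc a l}

def lncSpan (w : ℕ) : Submodule R A := Submodule.span R (lncSet A w)

def lncIdeal (w : ℕ) : Submodule R A :=
  Submodule.span R {x | ∃ u v c, c ∈ lncSet A w ∧ x = u * c * v}

variable {R A}

lemma lncSet_subset_lncSpan (w : ℕ) : lncSet A w ⊆ lncSpan R A w := Submodule.subset_span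

lemma mem_lncSpan_one (a : A) : a ∈ lncSpan R A 1 := Submodule.subset_span ⟨a, [], rfl, rfl⟩

lemma lnc_mem_lncSpan {w : ℕ} {x : A} (hx : x ∈ lncSpan R A w) (l : List A) :
    lnc x l ∈ lncSpan R A (w + l.length) := by
  suffices lncSpan R A w ≤ (lncSpan R A (w + l.length)).comap (lncLinearMap R l) from this hx
  refine Submodule.span_le.mpr ?_
  rintro _ ⟨a, l', rfl, rfl⟩
  show lnc (lnc a l') l ∈ lncSpan R A _
  rw [← lnc_append]
  exact Submodule.subset_span ⟨a, l' ++ l, by simp only [List.length_append]; omega, rfl⟩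

lemma rcomm_mem_lncSpan {w : ℕ} {x : A} (hx : x ∈ lncSpan R A w) (z : A) :
    rcomm x z ∈ lncSpan R A (w + 1) :=
  lnc_mem_lncSpan hx [z]

lemma rcomm_rcomm_mem_lncSpan {w : ℕ} {x : A} (hx : x ∈ lncSpan R A w) (p q : A) :
    rcomm x (rcomm p q) ∈ lncSpan R A (w + 2) := by
  rw [show rcomm x (rcomm p q) = rcomm (rcomm x p) q - rcomm (rcomm x q) p by
    simp only [rcomm]; noncomm_ring]
  exact sub_mem (rcomm_mem_lncSpan (rcomm_mem_lncSpan hx p) q)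
    (rcomm_mem_lncSpan (rcomm_mem_lncSpan hx q) p)

lemma exists_eq_rcomm_of_mem_lncSet {w : ℕ} {x : A} (hx : x ∈ lncSet A (w + 2)) :
    ∃ y ∈ lncSet A (w + 1), ∃ b, x = rcomm y b := by
  obtain ⟨a, l, hl, rfl⟩ := hx
  rcases l.eq_nil_or_concat' with rfl | ⟨l, b, rfl⟩
  · simp at hl
  · exact ⟨lnc a l, ⟨a, l, by simpa using hl, rfl⟩, b, lnc_concat a b l⟩

lemma lncSet_succ_subset {w : ℕ} (hw : 1 ≤ w) : lncSet A (w + 1) ⊆ lncSet A w := by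
  rintro _ ⟨a, _ | ⟨x, l⟩, hl, rfl⟩
  · simp at hl; omega
  · exact ⟨rcomm a x, l, by simpa using hl, rfl⟩

lemma lncSpan_antitone {t w : ℕ} (ht : 1 ≤ t) (h : t ≤ w) :
    lncSpan R A w ≤ lncSpan R A t := by
  refine Submodule.span_mono ?_
  induction w, h using Nat.le_induction with
  | base => exact le_rfl
  | succ w hw ih => exact (lncSet_succ_subset (ht.trans hw)).trans ih

lemma lncSpan_le_lncIdeal (w : ℕ) : lncSpan R A w ≤ lncIdeal R A w :=
  Submodule.span_le.mpr fun c hc => Submodule.subset_span ⟨1, 1, c, hc, by simp⟩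

lemma mul_mem_lncIdeal_left {w : ℕ} (z : A) {x : A} (hx : x ∈ lncIdeal R A w) :
    z * x ∈ lncIdeal R A w := by
  suffices lncIdeal R A w ≤ (lncIdeal R A w).comap (LinearMap.mulLeft R z) from this hx
  refine Submodule.span_le.mpr ?_
  rintro _ ⟨u, v, c, hc, rfl⟩
  exact Submodule.subset_span
    ⟨z * u, v, c, hc, by simp only [LinearMap.mulLeft_apply, mul_assoc]⟩

lemma mul_mem_lncIdeal_right {w : ℕ} (z : A) {x : A} (hx : x ∈ lncIdeal R A w) :
    x * z ∈ lncIdeal R A w := by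
  suffices lncIdeal R A w ≤ (lncIdeal R A w).comap (LinearMap.mulRight R z) from this hx
  refine Submodule.span_le.mpr ?_
  rintro _ ⟨u, v, c, hc, rfl⟩
  exact Submodule.subset_span
    ⟨u, v * z, c, hc, by simp only [LinearMap.mulRight_apply, mul_assoc]⟩

end Spans

section Reversal

variable {R A B : Type*} [CommRing R] [Ring A] [Algebra R A] [Ring B] [Algebra R B]

lemma map_mem_lncSpan_of_map_mul_rev (f : A →ₗ[R] B) (hf : ∀ x y, f (x * y) = f y * f x)
    {w : ℕ} {x : A} (hx : x ∈ lncSpan R A w) : f x ∈ lncSpan R B w := by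
  suffices lncSpan R A w ≤ (lncSpan R B w).comap f from this hx
  refine Submodule.span_le.mpr ?_
  rintro _ ⟨a, l, rfl, rfl⟩
  clear hx
  induction l using List.reverseRecOn with
  | nil => exact mem_lncSpan_one (f a)
  | append_singleton l z ih =>
    show f (lnc a (l ++ [z])) ∈ lncSpan R B _
    rw [lnc_concat, show f (rcomm (lnc a l) z) = -rcomm (f (lnc a l)) (f z) by
      simp only [rcomm, map_sub, hf, neg_sub], List.length_append, List.length_singleton]
    exact neg_mem (rcomm_mem_lncSpan ih (f z))

lemma map_mem_lncIdeal_of_map_mul_rev (f : A →ₗ[R] B) (hf : ∀ x y, f (x * y) = f y * f x)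
    {w : ℕ} {x : A} (hx : x ∈ lncIdeal R A w) : f x ∈ lncIdeal R B w := by
  suffices lncIdeal R A w ≤ (lncIdeal R B w).comap f from this hx
  refine Submodule.span_le.mpr ?_
  rintro _ ⟨u, v, c, hc, rfl⟩
  have hfc := lncSpan_le_lncIdeal w (map_mem_lncSpan_of_map_mul_rev f hf (Submodule.subset_span hc))
  show f (u * c * v) ∈ lncIdeal R B w
  rw [hf, hf, ← mul_assoc]
  exact mul_mem_lncIdeal_right _ (mul_mem_lncIdeal_left _ hfc)

lemma lncSpan_mul_le_of_mulOpposite {t i j : ℕ}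
    (h : lncSpan R Aᵐᵒᵖ j * lncSpan R Aᵐᵒᵖ i ≤ lncIdeal R Aᵐᵒᵖ t) :
    lncSpan R A i * lncSpan R A j ≤ lncIdeal R A t := by
  have hop := fun {w} {x : A} => map_mem_lncSpan_of_map_mul_rev (w := w) (x := x)
    (MulOpposite.opLinearEquiv R).toLinearMap fun _ _ => rfl
  refine Submodule.mul_le.mpr fun D hD E hE => ?_
  exact map_mem_lncIdeal_of_map_mul_rev (MulOpposite.opLinearEquiv R).symm.toLinearMap
    (fun _ _ => rfl) (Submodule.mul_le.mp h _ (hop hE) _ (hop hD))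

end Reversal

section Products

variable (R A : Type*) [CommRing R] [Ring A] [Algebra R A]

def LncProdMem (t i j r : ℕ) : Prop :=
  ∀ D ∈ lncSpan R A i, ∀ E ∈ lncSpan R A j, ∀ l : List A, l.length = r →
    lnc (D * E) l ∈ lncIdeal R A t

variable {R A} {t : ℕ}

lemma lncProdMem_zero_iff {i j : ℕ} :
    LncProdMem R A t i j 0 ↔ lncSpan R A i * lncSpan R A j ≤ lncIdeal R A t := by
  rw [Submodule.mul_le]
  refine ⟨fun h D hD E hE => h D hD E hE [] rfl, fun h D hD E hE l hl => ?_⟩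
  rw [List.length_eq_zero_iff.mp hl]
  exact h D hD E hE

lemma lncProdMem_of_lncSet {i j r : ℕ}
    (h : ∀ D ∈ lncSet A i, ∀ E ∈ lncSet A j, ∀ l : List A, l.length = r →
      lnc (D * E) l ∈ lncIdeal R A t) :
    LncProdMem R A t i j r := by
  intro D hD E hE l hl
  have hgen : ∀ D ∈ lncSet A i,
      lncSpan R A j ≤ (lncIdeal R A t).comap (lncLinearMap R l ∘ₗ LinearMap.mulLeft R D) :=
    fun D hD => Submodule.span_le.mpr fun E hE => h D hD E hE l hl
  have : lncSpan R A i ≤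
      (lncIdeal R A t).comap (lncLinearMap R l ∘ₗ LinearMap.mulRight R E) :=
    Submodule.span_le.mpr fun D hD => hgen D hD hE
  exact this hD

lemma lncProdMem_length_succ {i j r : ℕ} (h₁ : LncProdMem R A t i (j + 1) r)
    (h₂ : LncProdMem R A t (i + 1) j r) : LncProdMem R A t i j (r + 1) := by
  intro D hD E hE l hl
  obtain ⟨z, l, rfl⟩ := List.exists_cons_of_length_eq_add_one hl
  rw [lnc_cons, show rcomm (D * E) z = D * rcomm E z + rcomm D z * E by
    simp only [rcomm]; noncomm_ring, lnc_add]
  have hl : l.length = r := by simpa using hl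
  exact add_mem (h₁ D hD _ (rcomm_mem_lncSpan hE z) l hl)
    (h₂ _ (rcomm_mem_lncSpan hD z) E hE l hl)

lemma lncProdMem_weight_succ {i j r : ℕ} (h₁ : LncProdMem R A t i (j + 1) (r + 1))
    (h₂ : LncProdMem R A t (i + 1) (j + 1) r) : LncProdMem R A t i (j + 2) r := by
  refine lncProdMem_of_lncSet fun D hD E hE l hl => ?_
  obtain ⟨E, hE', q, rfl⟩ := exists_eq_rcomm_of_mem_lncSet hE
  rw [show D * rcomm E q = rcomm (D * E) q - rcomm D q * E by
    simp only [rcomm]; noncomm_ring, lnc_sub]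
  have hD := lncSet_subset_lncSpan (R := R) i hD
  have hE := lncSet_subset_lncSpan (R := R) (j + 1) hE'
  exact sub_mem (h₁ D hD E hE (q :: l) (by simp [hl])) (h₂ _ (rcomm_mem_lncSpan hD q) E hE l hl)

lemma lncProdMem_of_forall_zero {i j r : ℕ}
    (h : ∀ c ≤ r, LncProdMem R A t (i + c) (j + r - c) 0) :
    LncProdMem R A t i j r := by
  induction r generalizing i j with
  | zero => simpa using h 0 le_rfl
  | succ r ih =>
    refine lncProdMem_length_succ (ih fun c hc => ?_) (ih fun c hc => ?_)
    · simpa [show j + 1 + r - c = j + (r + 1) - c by omega] using h c (by omega)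
    · simpa [show i + 1 + c = i + (c + 1) by omega,
        show j + r - c = j + (r + 1) - (c + 1) by omega]
        using h (c + 1) (by omega)

lemma lncProdMem_of_forall_three {i k r : ℕ}
    (h : ∀ a ≤ k, LncProdMem R A t (i + a) 3 (r + k - a)) :
    LncProdMem R A t i (k + 3) r := by
  induction k generalizing i r with
  | zero => simpa using h 0 le_rfl
  | succ k ih =>
    refine lncProdMem_weight_succ (ih fun a ha => ?_) (ih fun a ha => ?_)
    · simpa [show r + 1 + k - a = r + (k + 1) - a by omega] using h a (by omega)
    · simpa [show i + 1 + a = i + (a + 1) by omega,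
        show r + k - a = r + (k + 1) - (a + 1) by omega]
        using h (a + 1) (by omega)

lemma lncProdMem_three {i r : ℕ} (ht : i + 3 + r = t) (h₁ : LncProdMem R A t (i + 3) 2 r)
    (h₂ : LncProdMem R A t 1 (i + 4) r) (h₃ : LncProdMem R A t 2 (i + 3) r) :
    LncProdMem R A t (i + 2) 3 r := by
  refine lncProdMem_of_lncSet fun D hD E hE l hl => ?_
  obtain ⟨G, hG, b, rfl⟩ := exists_eq_rcomm_of_mem_lncSet hD
  obtain ⟨E, hE', q, rfl⟩ := exists_eq_rcomm_of_mem_lncSet (w := 1) hE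
  obtain ⟨p, -, p', rfl⟩ := exists_eq_rcomm_of_mem_lncSet (w := 0) hE'
  have hG := lncSet_subset_lncSpan (R := R) (i + 1) hG
  have hE := lncSet_subset_lncSpan (R := R) 2 hE'
  have hGE : rcomm G (rcomm p p') ∈ lncSpan R A (i + 3) := rcomm_rcomm_mem_lncSpan hG p p'
  set E := rcomm p p'
  -- `[G, b E, q]` expanded by the Leibniz rule and solved for `[G, b] [E, q]`
  rw [show rcomm G b * rcomm E q = rcomm (rcomm G (b * E)) q - rcomm (rcomm G b) q * E
      - b * rcomm (rcomm G E) q - rcomm b q * rcomm G E by simp only [rcomm]; noncomm_ring,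
    lnc_sub, lnc_sub, lnc_sub]
  refine sub_mem (sub_mem (sub_mem ?_ ?_) ?_) ?_
  · have := lnc_mem_lncSpan hG ([b * E, q] ++ l)
    rw [lnc_append, show i + 1 + ([b * E, q] ++ l).length = t by simp; omega] at this
    exact lncSpan_le_lncIdeal t this
  · exact h₁ _ (rcomm_mem_lncSpan (rcomm_mem_lncSpan hG b) q) E hE l hl
  · exact h₂ b (mem_lncSpan_one b) _ (rcomm_mem_lncSpan hGE q) l hl
  · exact h₃ _ (rcomm_mem_lncSpan (mem_lncSpan_one b) q) _ hGE l hl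

end Products

section Main

variable {R : Type*} [CommRing R]

lemma lncSpan_mul_le_of_le_left {A : Type*} [Ring A] [Algebra R A] {t i : ℕ} (ht : 1 ≤ t)
    (hi : t ≤ i) (M : Submodule R A) : lncSpan R A i * M ≤ lncIdeal R A t :=
  Submodule.mul_le.mpr fun _ hD E _ =>
    mul_mem_lncIdeal_right E (lncSpan_le_lncIdeal t (lncSpan_antitone ht hi hD))

lemma lncSpan_mul_le_of_le_right {A : Type*} [Ring A] [Algebra R A] {t j : ℕ} (ht : 1 ≤ t)
    (hj : t ≤ j) (M : Submodule R A) : M * lncSpan R A j ≤ lncIdeal R A t :=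
  Submodule.mul_le.mpr fun D _ _ hE =>
    mul_mem_lncIdeal_left D (lncSpan_le_lncIdeal t (lncSpan_antitone ht hj hE))

lemma lncSpan_mul_le_of_forall_lt {A : Type*} [Ring A] [Algebra R A] {t i j : ℕ} (ht : 1 ≤ t)
    (hij : i + j = t + 2)
    (hA : ∀ x y, x + y = t + 2 → y < j → lncSpan R A x * lncSpan R A y ≤ lncIdeal R A t)
    (hAop : ∀ x y, x + y = t + 2 → y < j →
      lncSpan R Aᵐᵒᵖ x * lncSpan R Aᵐᵒᵖ y ≤ lncIdeal R Aᵐᵒᵖ t) :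
    lncSpan R A i * lncSpan R A j ≤ lncIdeal R A t := by
  have hU : ∀ x y r, x + y + r = t + 2 → y + r < j ∨ x + r < j →
      LncProdMem R A t x y r := by
    refine fun x y r hxyr hlt => lncProdMem_of_forall_zero fun c hc => lncProdMem_zero_iff.mpr ?_
    rcases hlt with hlt | hlt
    · exact hA _ _ (by omega) (by omega)
    · exact lncSpan_mul_le_of_mulOpposite (hAop _ _ (by omega) (by omega))
  by_cases hti : t ≤ i
  · exact lncSpan_mul_le_of_le_left ht hti _
  by_cases htj : t ≤ j
  · exact lncSpan_mul_le_of_le_right ht htj _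
  obtain ⟨i, rfl⟩ : ∃ i', i = i' + 2 := ⟨i - 2, by omega⟩
  obtain ⟨k, rfl⟩ : ∃ k, j = k + 3 := ⟨j - 3, by omega⟩
  refine lncProdMem_zero_iff.mp (lncProdMem_of_forall_three fun a ha => ?_)
  rw [show i + 2 + a = i + a + 2 by omega]
  exact lncProdMem_three (by omega) (hU _ _ _ (by omega) (by omega))
    (hU _ _ _ (by omega) (by omega)) (hU _ _ _ (by omega) (by omega))

universe u

theorem lncSpan_mul_lncSpan_le_of_add_eq {t : ℕ} (ht : 1 ≤ t) (j : ℕ) :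
    ∀ (A : Type u) [Ring A] [Algebra R A] (i : ℕ), i + j = t + 2 →
      lncSpan R A i * lncSpan R A j ≤ lncIdeal R A t := by
  induction j using Nat.strong_induction_on with
  | _ j ih =>
    intro A _ _ i hij
    exact lncSpan_mul_le_of_forall_lt ht hij (fun x y hxy hy => ih y hy A x hxy)
      (fun x y hxy hy => ih y hy Aᵐᵒᵖ x hxy)

variable {A : Type*} [Ring A] [Algebra R A]

theorem lncSpan_mul_lncSpan_le {m n : ℕ} (hm : 2 ≤ m) (hn : 2 ≤ n) :
    lncSpan R A m * lncSpan R A n ≤ lncIdeal R A (m + n - 2) :=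
  lncSpan_mul_lncSpan_le_of_add_eq (by omega) n A m (by omega)

theorem lncIdeal_mul_lncIdeal_le {m n : ℕ} (hm : 2 ≤ m) (hn : 2 ≤ n) :
    lncIdeal R A m * lncIdeal R A n ≤ lncIdeal R A (m + n - 2) := by
  have hL := Submodule.mul_le.mp (lncSpan_mul_lncSpan_le (R := R) (A := A) hm hn)
  have key : ∀ c ∈ lncSet A m, ∀ w, ∀ c' ∈ lncSet A n,
      c * w * c' ∈ lncIdeal R A (m + n - 2) := by
    intro c hc w c' hc'
    obtain ⟨m, rfl⟩ : ∃ m', m = m' + 2 := ⟨m - 2, by omega⟩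
    obtain ⟨G, hG, b, rfl⟩ := exists_eq_rcomm_of_mem_lncSet hc
    have hG := lncSet_subset_lncSpan (R := R) _ hG
    have hc' := lncSet_subset_lncSpan (R := R) _ hc'
    rw [show rcomm G b * w * c' = rcomm G (b * w) * c' - b * (rcomm G w * c') by
      simp only [rcomm]; noncomm_ring]
    exact sub_mem (hL _ (rcomm_mem_lncSpan hG _) _ hc')
      (mul_mem_lncIdeal_left b (hL _ (rcomm_mem_lncSpan hG _) _ hc'))
  refine (Submodule.span_mul_span R _ _).trans_le (Submodule.span_le.mpr ?_)
  rintro _ ⟨_, ⟨u, v, c, hc, rfl⟩, _, ⟨u', v', c', hc', rfl⟩, rfl⟩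
  show u * c * v * (u' * c' * v') ∈ lncIdeal R A _
  rw [show u * c * v * (u' * c' * v') = u * (c * (v * u') * c') * v' by simp only [mul_assoc]]
  exact mul_mem_lncIdeal_right v' (mul_mem_lncIdeal_left u (key c hc _ c' hc'))

end Main

/-- Latyshev, Gupta–Levin: for `m, n ≥ 2`, `I_m · I_n ⊆ I_{m+n−2}`. -/
theorem stmt_18 (m n : ℕ) (hm : 2 ≤ m) (hn : 2 ≤ n) :
    commIdeal K m * commIdeal K n ≤ commIdeal K (m + n - 2) :=
  -- `commIdeal K m` unfolds to `lncIdeal K (FreeAlgebra K ℕ) m`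
  lncIdeal_mul_lncIdeal_le hm hn
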